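/- The derived 'until' operator matches its expected semantics: defining φ U ψ := ⟨(φ?;τ)*⟩ψ, for any finite trace T of length λ and k < λ, T,k ⊨ φ U ψ iff there exists j with k ≤ j < λ such that T,j ⊨ ψ and for all i with k ≤ i < j, T,i ⊨ φ. -/
import Mathlib


namespace LDL

mutual
inductive Formula (α : Type) : Type where
  | atom : α → Formula α
  | bot : Formula α
  | top : Formula α
  | dia : Path α → Formula α → Formula α
  | box : Path α → Formula α → Formula α

inductive Path (α : Type) : Type where
  | tau : Path α
  | test : Formula α → Path α
  | plus : Path α → Path α → Path α
  | seq : Path α → Path α → Path α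
  | star : Path α → Path α
end

/-- n-fold iteration of a relation, with the 0-fold case restricted to points `< lam`. -/
def iterRel (r : ℕ → ℕ → Prop) (lam : ℕ) : ℕ → ℕ → ℕ → Prop
  | 0, k, i => k = i ∧ k < lam
  | n+1, k, i => ∃ j, r k j ∧ iterRel r lam n j i

mutual
/-- LDL_f satisfaction over a finite trace `T` of length `lam`. -/
def Sat (T : ℕ → Set α) (lam : ℕ) (φ : Formula α) (k : ℕ) : Prop :=
  match φ with
  | .atom a => a ∈ T k
  | .bot => False
  | .top => True
  | .dia ρ ψ => ∃ i, Rel T lam ρ k i ∧ Sat T lam ψ i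
  | .box ρ ψ => ∀ i, Rel T lam ρ k i → Sat T lam ψ i

/-- Accessibility relation of a path expression over trace `T` of length `lam`. -/
def Rel (T : ℕ → Set α) (lam : ℕ) (ρ : Path α) (k i : ℕ) : Prop :=
  match ρ with
  | .tau => i = k + 1 ∧ k + 1 < lam
  | .test φ => i = k ∧ Sat T lam φ k
  | .plus ρ₁ ρ₂ => Rel T lam ρ₁ k i ∨ Rel T lam ρ₂ k i
  | .seq ρ₁ ρ₂ => ∃ j, Rel T lam ρ₁ k j ∧ Rel T lam ρ₂ j i
  | .star ρ => ∃ n, iterRel (Rel T lam ρ) lam n k i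
end


lemma iter_fwd {α : Type} (T : ℕ → Set α) (lam : ℕ) (φ : Formula α) :
    ∀ n k i, iterRel (Rel T lam (.seq (.test φ) .tau)) lam n k i →
      k ≤ i ∧ i < lam ∧ ∀ m, k ≤ m → m < i → Sat T lam φ m := by
  intro n
  induction n with
  | zero => intro k i h; obtain ⟨rfl, h2⟩ := h; exact ⟨le_refl _, h2, fun m h1 h2 => absurd h2 (not_lt.2 h1)⟩
  | succ n ih =>
    intro k i h
    obtain ⟨j, ⟨m, ⟨rfl, hsat⟩, rfl, hlt⟩, hrest⟩ := h
    obtain ⟨h1, h2, h3⟩ := ih _ _ hrest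
    refine ⟨le_trans (Nat.le_succ _) h1, h2, fun p hp1 hp2 => ?_⟩
    rcases Nat.eq_or_lt_of_le hp1 with rfl | hlt'
    · exact hsat
    · exact h3 p hlt' hp2

lemma iter_bwd {α : Type} (T : ℕ → Set α) (lam : ℕ) (φ : Formula α) :
    ∀ d k, k + d < lam → (∀ m, k ≤ m → m < k + d → Sat T lam φ m) →
      ∃ n, iterRel (Rel T lam (.seq (.test φ) .tau)) lam n k (k + d) := by
  intro d
  induction d with
  | zero => intro k hk _; exact ⟨0, rfl, hk⟩
  | succ d ih =>
    intro k hk hφ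
    obtain ⟨n, hn⟩ := ih (k + 1) (by omega)
      (fun m h1 h2 => hφ m (by omega) (by omega))
    refine ⟨n + 1, k + 1, ⟨k, ⟨rfl, hφ k le_rfl (by omega)⟩, rfl, by omega⟩, ?_⟩
    have he : k + (d + 1) = k + 1 + d := by omega
    rw [he]; exact hn

/-- Until: `φ U ψ := ⟨(φ?;τ)*⟩ψ` has the expected semantics. -/
theorem until_correct {α : Type} (T : ℕ → Set α) (lam : ℕ) (φ ψ : Formula α)
    (k : ℕ) (hk : k < lam) :
    Sat T lam (.dia (.star (.seq (.test φ) .tau)) ψ) k ↔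
      ∃ j, k ≤ j ∧ j < lam ∧ Sat T lam ψ j ∧
        ∀ i, k ≤ i → i < j → Sat T lam φ i := by
  constructor
  · rintro ⟨j, ⟨n, hiter⟩, hψ⟩
    obtain ⟨h1, h2, h3⟩ := iter_fwd T lam φ n k j hiter
    exact ⟨j, h1, h2, hψ, h3⟩
  · rintro ⟨j, h1, h2, hψ, hφ⟩
    obtain ⟨n, hn⟩ := iter_bwd T lam φ (j - k) k (by omega)
      (fun m hm1 hm2 => hφ m hm1 (by omega))
    have : k + (j - k) = j := by omega
    rw [this] at hn
    exact ⟨j, ⟨n, hn⟩, hψ⟩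

end LDL
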